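/- arXiv:1302.3098 — 6 statements merged into one kernel-verified Lean document; each statement's English description precedes it below -/
import Mathlib

section
/- Let x(λ) and x(η) denote the (unique) minimizers over X of x ↦ φ₁(x) + ⟨λ, Ax⟩ + c·d_X(x) and x ↦ φ₁(x) + ⟨η, Ax⟩ + c·d_X(x), respectively. Then c·σ_X·‖x(λ) − x(η)‖² ≤ ⟨η − λ, A x(λ) − A x(η)⟩. -/
/-!
Write `F_μ x = g x + ⟪μ, A x⟫` with `g = φ₁ + c • d_X`. Since `X` is convex, first-order
optimality gives `F_λ'(x(λ)) (x(η) - x(λ)) ≥ 0` and `F_η'(x(η)) (x(λ) - x(η)) ≥ 0`. Adding the two,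
the linear terms leave `⟪η - λ, A x(λ) - A x(η)⟫`, while the derivative of `g` is strongly
monotone with constant `c σ_X` (the derivative of the convex `φ₁` is monotone).
-/

open scoped RealInnerProductSpace

section FirstOrder

variable {E : Type*} [NormedAddCommGroup E] [NormedSpace ℝ E]

theorem ConvexOn.hasFDerivAt_le_sub {s : Set E} {f : E → ℝ} {f' : E →L[ℝ] ℝ} {x y : E}
    (hf : ConvexOn ℝ s f) (hx : x ∈ s) (hy : y ∈ s) (hf' : HasFDerivAt f f' x) :
    f' (y - x) ≤ f y - f x := by
  set L : ℝ →ᵃ[ℝ] E := AffineMap.lineMap x y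
  have hline : ConvexOn ℝ (L ⁻¹' s) (f ∘ L) := hf.comp_affineMap L
  have hderiv : HasDerivAt (f ∘ L) (f' (y - x)) 0 := by
    refine HasFDerivAt.comp_hasDerivAt (0 : ℝ) ?_ AffineMap.hasDerivAt_lineMap
    simpa [L] using hf'
  simpa [L, slope_def_field] using
    hline.le_slope_of_hasDerivAt (by simpa [L] using hx) (by simpa [L] using hy) zero_lt_one hderiv

theorem ConvexOn.hasFDerivAt_sub_apply_sub_nonneg {s : Set E} {f : E → ℝ} {f'x f'y : E →L[ℝ] ℝ}
    {x y : E} (hf : ConvexOn ℝ s f) (hx : x ∈ s) (hy : y ∈ s) (hf'x : HasFDerivAt f f'x x)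
    (hf'y : HasFDerivAt f f'y y) : 0 ≤ (f'x - f'y) (x - y) := by
  have hxy := hf.hasFDerivAt_le_sub hx hy hf'x
  have hyx := hf.hasFDerivAt_le_sub hy hx hf'y
  rw [← neg_sub x y, map_neg] at hxy
  simp only [sub_apply]
  linarith

theorem IsMinOn.hasFDerivAt_apply_sub_nonneg {s : Set E} {f : E → ℝ} {f' : E →L[ℝ] ℝ}
    {x y : E} (h : IsMinOn f s x) (hs : Convex ℝ s) (hx : x ∈ s) (hy : y ∈ s)
    (hf : HasFDerivAt f f' x) : 0 ≤ f' (y - x) :=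
  h.localize.hasFDerivWithinAt_nonneg hf.hasFDerivWithinAt
    (sub_mem_posTangentConeAt_of_segment_subset (hs.segment_subset hx hy))

end FirstOrder

theorem IsMinOn.strongly_monotone_of_linear_perturbation {E F : Type*} [NormedAddCommGroup E]
    [NormedSpace ℝ E] [NormedAddCommGroup F] [InnerProductSpace ℝ F] {X : Set E}
    (hX : Convex ℝ X) {g : E → ℝ} {g' : E → E →L[ℝ] ℝ} (hg : ∀ x ∈ X, HasFDerivAt g (g' x) x)
    {κ : ℝ} (hg' : ∀ x ∈ X, ∀ y ∈ X, κ * ‖x - y‖ ^ 2 ≤ (g' x - g' y) (x - y))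
    (A : E →L[ℝ] F) {lam eta : F} {xl xe : E} (hxl : xl ∈ X) (hxe : xe ∈ X)
    (hxlmin : IsMinOn (fun x => g x + ⟪lam, A x⟫) X xl)
    (hxemin : IsMinOn (fun x => g x + ⟪eta, A x⟫) X xe) :
    κ * ‖xl - xe‖ ^ 2 ≤ ⟪eta - lam, A xl - A xe⟫ := by
  have hF : ∀ (μ : F), ∀ x ∈ X,
      HasFDerivAt (fun x => g x + ⟪μ, A x⟫) (g' x + (innerSL ℝ μ).comp A) x :=
    fun μ x hx => (hg x hx).add ((innerSL ℝ μ).comp A).hasFDerivAt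
  have hl := hxlmin.hasFDerivAt_apply_sub_nonneg hX hxl hxe (hF lam xl hxl)
  have he := hxemin.hasFDerivAt_apply_sub_nonneg hX hxe hxl (hF eta xe hxe)
  have hmono := hg' xl hxl xe hxe
  simp only [add_apply, sub_apply, ContinuousLinearMap.comp_apply, innerSL_apply_apply, map_sub,
    inner_sub_left, inner_sub_right] at hl he hmono ⊢
  linarith

theorem minimizers_monotonicity_general {n m : ℕ}
    (X : Set (EuclideanSpace ℝ (Fin m)))
    (hXconv : Convex ℝ X)
    (φ₁ : EuclideanSpace ℝ (Fin m) → ℝ)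
    (hφ₁diff : ∀ x, DifferentiableAt ℝ φ₁ x) (hφ₁conv : ConvexOn ℝ Set.univ φ₁)
    (A : EuclideanSpace ℝ (Fin m) →L[ℝ] EuclideanSpace ℝ (Fin n))
    (dX : EuclideanSpace ℝ (Fin m) → ℝ) (hdXdiff : ∀ x, DifferentiableAt ℝ dX x)
    (σX : ℝ)
    (hdXmono : ∀ x ∈ X, ∀ y ∈ X,
      σX * ‖x - y‖ ^ 2 ≤ ⟪gradient dX x - gradient dX y, x - y⟫)
    (c : ℝ) (hc : 0 < c)
    (lam eta : EuclideanSpace ℝ (Fin n))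
    (xl xe : EuclideanSpace ℝ (Fin m)) (hxl : xl ∈ X) (hxe : xe ∈ X)
    (hxlmin : IsMinOn (fun x => φ₁ x + ⟪lam, A x⟫ + c * dX x) X xl)
    (hxemin : IsMinOn (fun x => φ₁ x + ⟪eta, A x⟫ + c * dX x) X xe) :
    c * σX * ‖xl - xe‖ ^ 2 ≤ ⟪eta - lam, A xl - A xe⟫ := by
  set g' : EuclideanSpace ℝ (Fin m) → _ := fun x =>
    fderiv ℝ φ₁ x + c • InnerProductSpace.toDual ℝ _ (gradient dX x)
  have hg : ∀ x ∈ X, HasFDerivAt (fun x => φ₁ x + c * dX x) (g' x) x := fun x _ =>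
    (hφ₁diff x).hasFDerivAt.add ((hdXdiff x).hasGradientAt.hasFDerivAt.const_mul c)
  have hg' : ∀ x ∈ X, ∀ y ∈ X, c * σX * ‖x - y‖ ^ 2 ≤ (g' x - g' y) (x - y) := by
    intro x hx y hy
    have hφ₁ := hφ₁conv.hasFDerivAt_sub_apply_sub_nonneg (Set.mem_univ x) (Set.mem_univ y)
      (hφ₁diff x).hasFDerivAt (hφ₁diff y).hasFDerivAt
    have hdX := mul_le_mul_of_nonneg_left (hdXmono x hx y hy) hc.le
    simp only [g', sub_apply, add_apply, smul_apply, InnerProductSpace.toDual_apply_apply,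
      smul_eq_mul, inner_sub_left] at hφ₁ hdX ⊢
    linarith
  have hxlmin' : IsMinOn (fun x => φ₁ x + c * dX x + ⟪lam, A x⟫) X xl := by
    simpa only [add_right_comm] using hxlmin
  have hxemin' : IsMinOn (fun x => φ₁ x + c * dX x + ⟪eta, A x⟫) X xe := by
    simpa only [add_right_comm] using hxemin
  exact hxlmin'.strongly_monotone_of_linear_perturbation hXconv hg hg' A hxl hxe hxemin'

/-- strong monotonicity inequality for the minimizers. -/
theorem minimizers_monotonicity {n m : ℕ}
    (X : Set (EuclideanSpace ℝ (Fin m)))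
    (hXne : X.Nonempty) (hXcomp : IsCompact X) (hXconv : Convex ℝ X)
    (φ₁ : EuclideanSpace ℝ (Fin m) → ℝ)
    (hφ₁diff : ∀ x, DifferentiableAt ℝ φ₁ x) (hφ₁conv : ConvexOn ℝ Set.univ φ₁)
    (A : EuclideanSpace ℝ (Fin m) →L[ℝ] EuclideanSpace ℝ (Fin n))
    (dX : EuclideanSpace ℝ (Fin m) → ℝ) (hdXdiff : ∀ x, DifferentiableAt ℝ dX x)
    (σX : ℝ) (hσX : 0 < σX)
    (hdXmono : ∀ x ∈ X, ∀ y ∈ X,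
      σX * ‖x - y‖ ^ 2 ≤ ⟪gradient dX x - gradient dX y, x - y⟫)
    (c : ℝ) (hc : 0 < c)
    (lam eta : EuclideanSpace ℝ (Fin n))
    (xl xe : EuclideanSpace ℝ (Fin m)) (hxl : xl ∈ X) (hxe : xe ∈ X)
    (hxlmin : IsMinOn (fun x => φ₁ x + ⟪lam, A x⟫ + c * dX x) X xl)
    (hxemin : IsMinOn (fun x => φ₁ x + ⟪eta, A x⟫ + c * dX x) X xe) :
    c * σX * ‖xl - xe‖ ^ 2 ≤ ⟪eta - lam, A xl - A xe⟫ :=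
  minimizers_monotonicity_general X hXconv φ₁ hφ₁diff hφ₁conv A dX hdXdiff σX hdXmono c hc lam eta
    xl xe hxl hxe hxlmin hxemin
end

section
/- Let x(λ) denote the unique minimizer over X of x ↦ φ₁(x) + ⟨λ, Ax⟩ + c·d_X(x). Then the map λ ↦ A x(λ) is Lipschitz continuous with constant ‖A‖²/(c σ_X), i.e. ‖A x(λ) − A x(η)‖ ≤ (‖A‖²/(c σ_X))‖λ − η‖ for all λ, η ∈ ℝⁿ, where ‖A‖ is the operator norm of A. -/
open scoped RealInnerProductSpace

section Aux
variable {E : Type*} [NormedAddCommGroup E] [InnerProductSpace ℝ E] [CompleteSpace E]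

lemma inner_grad_eq_fderiv (f : E → ℝ) (x v : E) :
    ⟪gradient f x, v⟫ = fderiv ℝ f x v := by
  rw [gradient, InnerProductSpace.toDual_symm_apply]

lemma varineq {f : E → ℝ} {f' : E →L[ℝ] ℝ} {X : Set E} (hX : Convex ℝ X) {x : E}
    (hx : x ∈ X) (hf : HasFDerivAt f f' x) (hmin : IsMinOn f X x) {y : E} (hy : y ∈ X) :
    0 ≤ f' (y - x) := by
  exact IsLocalMinOn.hasFDerivWithinAt_nonneg (hmin.localize) (hf.hasFDerivWithinAt (s := X))
    (sub_mem_posTangentConeAt_of_segment_subset (hX.segment_subset hx hy))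

lemma lineMap_hasDerivAt (x y : E) (t : ℝ) :
    HasDerivAt (fun t : ℝ => AffineMap.lineMap x y t) (y - x) t := by
  have h : HasDerivAt (fun t : ℝ => (1 - t) • x + t • y) (((0:ℝ) - 1) • x + (1:ℝ) • y) t :=
    (((hasDerivAt_const t (1:ℝ)).sub (hasDerivAt_id t)).smul_const x).add
      ((hasDerivAt_id t).smul_const y)
  have he : ((0:ℝ) - 1) • x + (1:ℝ) • y = y - x := by
    simp [sub_smul, sub_eq_neg_add]
  rw [he] at h
  convert h using 2 with t
  simp [AffineMap.lineMap_apply_module]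

lemma grad_mono_of_convex {f : E → ℝ} (hconv : ConvexOn ℝ Set.univ f)
    (hdiff : ∀ x, DifferentiableAt ℝ f x) (x y : E) :
    fderiv ℝ f x (y - x) ≤ fderiv ℝ f y (y - x) := by
  set g : ℝ → ℝ := f ∘ (AffineMap.lineMap x y : ℝ →ᵃ[ℝ] E) with hg
  have hgconv : ConvexOn ℝ Set.univ g := by
    simpa using hconv.comp_affineMap (AffineMap.lineMap x y)
  have hgd : ∀ t : ℝ, HasDerivAt g (fderiv ℝ f (AffineMap.lineMap x y t) (y - x)) t :=
    fun t => ((hdiff _).hasFDerivAt).comp_hasDerivAt t (lineMap_hasDerivAt x y t)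
  have h1 : fderiv ℝ f x (y - x) ≤ slope g 0 1 := by
    have := hgconv.le_slope_of_hasDerivAt (Set.mem_univ 0) (Set.mem_univ 1) zero_lt_one
      (by simpa using hgd 0)
    simpa using this
  have h2 : slope g 0 1 ≤ fderiv ℝ f y (y - x) := by
    have := hgconv.slope_le_of_hasDerivAt (Set.mem_univ 0) (Set.mem_univ 1) zero_lt_one
      (by simpa using hgd 1)
    simpa using this
  linarith

end Aux

/-- λ ↦ A x(λ) is Lipschitz with constant ‖A‖²/(c σ_X). -/
theorem Ax_lipschitz {n m : ℕ}
    (X : Set (EuclideanSpace ℝ (Fin m)))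
    (hXne : X.Nonempty) (hXcomp : IsCompact X) (hXconv : Convex ℝ X)
    (φ₁ : EuclideanSpace ℝ (Fin m) → ℝ)
    (hφ₁diff : ∀ x, DifferentiableAt ℝ φ₁ x) (hφ₁conv : ConvexOn ℝ Set.univ φ₁)
    (A : EuclideanSpace ℝ (Fin m) →L[ℝ] EuclideanSpace ℝ (Fin n))
    (dX : EuclideanSpace ℝ (Fin m) → ℝ) (hdXdiff : ∀ x, DifferentiableAt ℝ dX x)
    (σX : ℝ) (hσX : 0 < σX)
    (hdXmono : ∀ x ∈ X, ∀ y ∈ X,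
      σX * ‖x - y‖ ^ 2 ≤ ⟪gradient dX x - gradient dX y, x - y⟫)
    (c : ℝ) (hc : 0 < c)
    (xsol : EuclideanSpace ℝ (Fin n) → EuclideanSpace ℝ (Fin m))
    (hxsol : ∀ lam, xsol lam ∈ X ∧
      IsMinOn (fun x => φ₁ x + ⟪lam, A x⟫ + c * dX x) X (xsol lam))
    (hxsol_unique : ∀ lam, ∀ x₀ ∈ X,
      IsMinOn (fun x => φ₁ x + ⟪lam, A x⟫ + c * dX x) X x₀ → x₀ = xsol lam) :
    ∀ lam eta : EuclideanSpace ℝ (Fin n),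
      ‖A (xsol lam) - A (xsol eta)‖ ≤ ‖A‖ ^ 2 / (c * σX) * ‖lam - eta‖ := by
  intro lam eta
  set xl := xsol lam with hxl
  set xe := xsol eta with hxe
  obtain ⟨hxlX, hxlmin⟩ := hxsol lam
  obtain ⟨hxeX, hxemin⟩ := hxsol eta
  by_cases hveq : xl = xe
  · rw [hveq, sub_self, norm_zero]
    positivity
  -- derivative of the objective
  have hF : ∀ (μ : EuclideanSpace ℝ (Fin n)) (p : EuclideanSpace ℝ (Fin m)),
      HasFDerivAt (fun x => φ₁ x + ⟪μ, A x⟫ + c * dX x)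
        ((fderiv ℝ φ₁ p) + ((innerSL ℝ μ).comp A) + c • (fderiv ℝ dX p)) p := by
    intro μ p
    have h1 : HasFDerivAt (fun x => ⟪μ, A x⟫) ((innerSL ℝ μ).comp A) p :=
      ((innerSL ℝ μ).comp A).hasFDerivAt
    exact ((hφ₁diff p).hasFDerivAt.add h1).add ((hdXdiff p).hasFDerivAt.const_mul c)
  have h1 := varineq hXconv hxlX (hF lam xl) hxlmin hxeX
  have h2 := varineq hXconv hxeX (hF eta xe) hxemin hxlX
  simp only [ContinuousLinearMap.add_apply, ContinuousLinearMap.coe_smul',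
    Pi.smul_apply, ContinuousLinearMap.comp_apply, innerSL_apply_apply, smul_eq_mul] at h1 h2
  have hm := grad_mono_of_convex hφ₁conv hφ₁diff xl xe
  have hmono := hdXmono xl hxlX xe hxeX
  rw [inner_sub_left, inner_grad_eq_fderiv, inner_grad_eq_fderiv] at hmono
  -- rewrite everything in terms of v := xe - xl
  have hsub : xl - xe = -(xe - xl) := by abel
  rw [hsub, map_neg, map_neg, map_neg, inner_neg_right] at h2
  rw [hsub, map_neg, map_neg, norm_neg] at hmono
  -- key inequality
  have hkey : c * σX * ‖xe - xl‖ ^ 2 ≤ ⟪lam - eta, A (xe - xl)⟫ := by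
    rw [inner_sub_left]
    nlinarith [hmono, hm, h1, h2]
  have hAv : ‖A (xe - xl)‖ ≤ ‖A‖ * ‖xe - xl‖ := A.le_opNorm _
  have hinner : ⟪lam - eta, A (xe - xl)⟫ ≤ ‖lam - eta‖ * (‖A‖ * ‖xe - xl‖) :=
    (real_inner_le_norm _ _).trans
      (mul_le_mul_of_nonneg_left hAv (norm_nonneg _))
  have hvpos : 0 < ‖xe - xl‖ := by
    rw [norm_pos_iff]
    exact sub_ne_zero_of_ne (Ne.symm hveq)
  have hgoal : ‖A xl - A xe‖ = ‖A (xe - xl)‖ := by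
    rw [← map_sub, hsub, map_neg, norm_neg]
  rw [hgoal, div_mul_eq_mul_div, le_div_iff₀ (by positivity)]
  nlinarith [hkey, hAv, hvpos, norm_nonneg (A (xe - xl)), norm_nonneg (lam - eta),
    norm_nonneg A, mul_le_mul_of_nonneg_left hAv (mul_pos hc hσX).le]
end

section
/- Let x(λ) and z(λ) denote the unique minimizers over X and Z of x ↦ φ₁(x) + ⟨λ, Ax⟩ + c·d_X(x) and z ↦ φ₂(z) + ⟨λ, Bz⟩ + c·d_Z(z), respectively. Then the map λ ↦ A x(λ) + B z(λ) − b is Lipschitz continuous on ℝⁿ with Lipschitz constant L_c = ‖A‖²/(c σ_X) + ‖B‖²/(c σ_Z). -/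
/-!
Each minimizer solves the variational inequality `⟪∇φ x + c ∇d x + A† λ, y - x⟫ ≥ 0` on its
constraint set. Since `∇φ` is monotone and `c ∇d` is `c σ`-strongly monotone, subtracting the
inequalities for `λ` and `η` gives `c σ ‖x(λ) - x(η)‖² ≤ ⟪A† (η - λ), x(λ) - x(η)⟫`, so `x` is
`‖A‖ / (c σ)`-Lipschitz, and likewise `z` is `‖B‖ / (c σ_Z)`-Lipschitz. Composing with `A` and `B`
multiplies these constants by `‖A‖` and `‖B‖`.
-/

open scoped RealInnerProductSpace InnerProduct Gradient
open Set InnerProductSpace ContinuousLinearMap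

section
variable {E F : Type*} [NormedAddCommGroup E] [InnerProductSpace ℝ E]
  [NormedAddCommGroup F] [InnerProductSpace ℝ F]

theorem norm_sub_le_of_strongly_monotone_variational_ineq {s : Set E} {T : E → E} {κ : ℝ}
    (hκ : 0 < κ) (hT : ∀ x ∈ s, ∀ y ∈ s, κ * ‖x - y‖ ^ 2 ≤ ⟪T x - T y, x - y⟫)
    {x₁ x₂ u₁ u₂ : E} (hx₁ : x₁ ∈ s) (hx₂ : x₂ ∈ s)
    (h₁ : 0 ≤ ⟪T x₁ + u₁, x₂ - x₁⟫) (h₂ : 0 ≤ ⟪T x₂ + u₂, x₁ - x₂⟫) :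
    ‖x₁ - x₂‖ ≤ ‖u₁ - u₂‖ / κ := by
  rw [le_div_iff₀ hκ]
  have hsum : ⟪T x₁ - T x₂, x₁ - x₂⟫ ≤ ⟪u₂ - u₁, x₁ - x₂⟫ := by
    rw [← neg_sub x₁ x₂, inner_neg_right] at h₁
    simp only [inner_add_left, inner_sub_left] at h₁ h₂ ⊢
    linarith
  have hcs : ⟪u₂ - u₁, x₁ - x₂⟫ ≤ ‖u₁ - u₂‖ * ‖x₁ - x₂‖ :=
    norm_sub_rev u₁ u₂ ▸ real_inner_le_norm _ _
  have hsq : ‖x₁ - x₂‖ * (‖x₁ - x₂‖ * κ) ≤ ‖x₁ - x₂‖ * ‖u₁ - u₂‖ := by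
    nlinarith [hT x₁ hx₁ x₂ hx₂]
  rcases (norm_nonneg (x₁ - x₂)).eq_or_lt with h0 | h0
  · rw [← h0, zero_mul]
    exact norm_nonneg _
  · exact le_of_mul_le_mul_left hsq h0

variable [CompleteSpace E] [CompleteSpace F]

theorem IsMinOn.inner_gradient_sub_nonneg {s : Set E} (hs : Convex ℝ s) {f : E → ℝ} {g a y : E}
    (hmin : IsMinOn f s a) (hf : HasGradientAt f g a) (ha : a ∈ s) (hy : y ∈ s) :
    0 ≤ ⟪g, y - a⟫ :=
  hmin.localize.hasFDerivWithinAt_nonneg (hasGradientAt_iff_hasFDerivAt.mp hf).hasFDerivWithinAt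
    (sub_mem_posTangentConeAt_of_segment_subset (hs.segment_subset ha hy))

theorem ConvexOn.add_inner_gradient_le {s : Set E} {f : E → ℝ} (hf : ConvexOn ℝ s f)
    {g x y : E} (hg : HasGradientAt f g x) (hx : x ∈ s) (hy : y ∈ s) :
    f x + ⟪g, y - x⟫ ≤ f y := by
  set L : ℝ →ᵃ[ℝ] E := AffineMap.lineMap x y
  have hline : ConvexOn ℝ (L ⁻¹' s) (f ∘ L) := hf.comp_affineMap L
  have hderiv : HasDerivAt (f ∘ L) ⟪g, y - x⟫ 0 := by
    have hg' : HasFDerivAt f (toDual ℝ E g) (L 0) := by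
      simpa [L] using hasGradientAt_iff_hasFDerivAt.mp hg
    simpa using hg'.comp_hasDerivAt (0 : ℝ) AffineMap.hasDerivAt_lineMap
  have hL0 : L 0 = x := AffineMap.lineMap_apply_zero x y
  have hL1 : L 1 = y := AffineMap.lineMap_apply_one x y
  have hslope := hline.le_slope_of_hasDerivAt (x := 0) (y := 1)
    (by simpa [hL0] using hx) (by simpa [hL1] using hy) one_pos hderiv
  simp only [slope_def_field, Function.comp_apply, hL0, hL1, sub_zero, div_one] at hslope
  linarith

theorem ConvexOn.inner_gradient_sub_nonneg {s : Set E} {f : E → ℝ} (hf : ConvexOn ℝ s f)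
    {x y gx gy : E} (hgx : HasGradientAt f gx x) (hgy : HasGradientAt f gy y)
    (hx : x ∈ s) (hy : y ∈ s) : 0 ≤ ⟪gx - gy, x - y⟫ := by
  have hxy := hf.add_inner_gradient_le hgx hx hy
  have hyx := hf.add_inner_gradient_le hgy hy hx
  rw [← neg_sub x y, inner_neg_right] at hxy
  rw [inner_sub_left]
  linarith

theorem HasGradientAt.add_inner_apply_add_mul {φ d : E → ℝ} {gφ gd a : E}
    (hφ : HasGradientAt φ gφ a) (hd : HasGradientAt d gd a) (A : E →L[ℝ] F) (μ : F) (c : ℝ) :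
    HasGradientAt (fun x => φ x + ⟪μ, A x⟫ + c * d x) (gφ + c • gd + (A†) μ) a := by
  rw [hasGradientAt_iff_hasFDerivAt] at hφ hd ⊢
  have hA : HasFDerivAt (fun x => ⟪μ, A x⟫) (toDual ℝ E ((A†) μ)) a := by
    refine ((innerSL ℝ μ).comp A).hasFDerivAt.congr_fderiv ?_
    ext v
    simp [adjoint_inner_left]
  refine ((hφ.add hA).add (hd.const_mul c)).congr_fderiv ?_
  ext v
  simp only [add_apply, toDual_apply_apply, smul_apply, smul_eq_mul, map_add, map_smul]
  ring

theorem norm_sub_le_of_isMinOn_add_inner_add_mul {s : Set E} (hs : Convex ℝ s)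
    {φ d : E → ℝ} (hφ : ConvexOn ℝ s φ) (hφd : ∀ x ∈ s, DifferentiableAt ℝ φ x)
    (hdd : ∀ x ∈ s, DifferentiableAt ℝ d x) {σ c : ℝ} (hσ : 0 < σ) (hc : 0 < c)
    (hd : ∀ x ∈ s, ∀ y ∈ s, σ * ‖x - y‖ ^ 2 ≤ ⟪∇ d x - ∇ d y, x - y⟫)
    (A : E →L[ℝ] F) {lam eta : F} {x₁ x₂ : E} (hx₁ : x₁ ∈ s) (hx₂ : x₂ ∈ s)
    (hm₁ : IsMinOn (fun x => φ x + ⟪lam, A x⟫ + c * d x) s x₁)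
    (hm₂ : IsMinOn (fun x => φ x + ⟪eta, A x⟫ + c * d x) s x₂) :
    ‖x₁ - x₂‖ ≤ ‖A‖ / (c * σ) * ‖lam - eta‖ := by
  set T : E → E := fun x => ∇ φ x + c • ∇ d x
  have hT : ∀ x ∈ s, ∀ y ∈ s, c * σ * ‖x - y‖ ^ 2 ≤ ⟪T x - T y, x - y⟫ := by
    intro x hx y hy
    have hφmono := hφ.inner_gradient_sub_nonneg (hφd x hx).hasGradientAt
      (hφd y hy).hasGradientAt hx hy
    have hdmono := mul_le_mul_of_nonneg_left (hd x hx y hy) hc.le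
    have hsplit : ⟪T x - T y, x - y⟫ = ⟪∇ φ x - ∇ φ y, x - y⟫
        + c * ⟪∇ d x - ∇ d y, x - y⟫ := by
      rw [← real_inner_smul_left, ← inner_add_left]
      congr 1
      simp only [T, smul_sub]
      abel
    rw [hsplit]
    nlinarith
  have hopt : ∀ {μ : F} {x y : E}, x ∈ s → y ∈ s →
      IsMinOn (fun x => φ x + ⟪μ, A x⟫ + c * d x) s x → 0 ≤ ⟪T x + (A†) μ, y - x⟫ :=
    fun hx hy hm => hm.inner_gradient_sub_nonneg hs
      ((hφd _ hx).hasGradientAt.add_inner_apply_add_mul (hdd _ hx).hasGradientAt A _ c) hx hy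
  calc ‖x₁ - x₂‖ ≤ ‖(A†) lam - (A†) eta‖ / (c * σ) :=
        norm_sub_le_of_strongly_monotone_variational_ineq (mul_pos hc hσ) hT hx₁ hx₂
          (hopt hx₁ hx₂ hm₁) (hopt hx₂ hx₁ hm₂)
    _ ≤ ‖A‖ * ‖lam - eta‖ / (c * σ) := by
        gcongr
        rw [← map_sub, ← LinearIsometryEquiv.norm_map adjoint A]
        exact (A†).le_opNorm _
    _ = ‖A‖ / (c * σ) * ‖lam - eta‖ := by ring

end

theorem gradient_map_lipschitz_general {n m p : ℕ}
    (X : Set (EuclideanSpace ℝ (Fin m))) (Z : Set (EuclideanSpace ℝ (Fin p)))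
    (hXconv : Convex ℝ X)
    (hZconv : Convex ℝ Z)
    (φ₁ : EuclideanSpace ℝ (Fin m) → ℝ) (φ₂ : EuclideanSpace ℝ (Fin p) → ℝ)
    (hφ₁diff : ∀ x, DifferentiableAt ℝ φ₁ x) (hφ₁conv : ConvexOn ℝ Set.univ φ₁)
    (hφ₂diff : ∀ z, DifferentiableAt ℝ φ₂ z) (hφ₂conv : ConvexOn ℝ Set.univ φ₂)
    (A : EuclideanSpace ℝ (Fin m) →L[ℝ] EuclideanSpace ℝ (Fin n))
    (B : EuclideanSpace ℝ (Fin p) →L[ℝ] EuclideanSpace ℝ (Fin n))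
    (b : EuclideanSpace ℝ (Fin n))
    (dX : EuclideanSpace ℝ (Fin m) → ℝ) (dZ : EuclideanSpace ℝ (Fin p) → ℝ)
    (hdXdiff : ∀ x, DifferentiableAt ℝ dX x) (hdZdiff : ∀ z, DifferentiableAt ℝ dZ z)
    (σX σZ : ℝ) (hσX : 0 < σX) (hσZ : 0 < σZ)
    (hdXmono : ∀ x ∈ X, ∀ y ∈ X,
      σX * ‖x - y‖ ^ 2 ≤ ⟪gradient dX x - gradient dX y, x - y⟫)
    (hdZmono : ∀ z ∈ Z, ∀ w ∈ Z,
      σZ * ‖z - w‖ ^ 2 ≤ ⟪gradient dZ z - gradient dZ w, z - w⟫)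
    (c : ℝ) (hc : 0 < c)
    (xsol : EuclideanSpace ℝ (Fin n) → EuclideanSpace ℝ (Fin m))
    (zsol : EuclideanSpace ℝ (Fin n) → EuclideanSpace ℝ (Fin p))
    (hxsol : ∀ lam, xsol lam ∈ X ∧
      IsMinOn (fun x => φ₁ x + ⟪lam, A x⟫ + c * dX x) X (xsol lam))
    (hzsol : ∀ lam, zsol lam ∈ Z ∧
      IsMinOn (fun z => φ₂ z + ⟪lam, B z⟫ + c * dZ z) Z (zsol lam))
    :
    ∀ lam eta : EuclideanSpace ℝ (Fin n),
      ‖(A (xsol lam) + B (zsol lam) - b) - (A (xsol eta) + B (zsol eta) - b)‖ ≤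
        (‖A‖ ^ 2 / (c * σX) + ‖B‖ ^ 2 / (c * σZ)) * ‖lam - eta‖ := by
  intro lam eta
  have hx : ‖xsol lam - xsol eta‖ ≤ ‖A‖ / (c * σX) * ‖lam - eta‖ :=
    norm_sub_le_of_isMinOn_add_inner_add_mul hXconv (hφ₁conv.subset (subset_univ X) hXconv)
      (fun x _ => hφ₁diff x) (fun x _ => hdXdiff x) hσX hc hdXmono A
      (hxsol lam).1 (hxsol eta).1 (hxsol lam).2 (hxsol eta).2
  have hz : ‖zsol lam - zsol eta‖ ≤ ‖B‖ / (c * σZ) * ‖lam - eta‖ :=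
    norm_sub_le_of_isMinOn_add_inner_add_mul hZconv (hφ₂conv.subset (subset_univ Z) hZconv)
      (fun z _ => hφ₂diff z) (fun z _ => hdZdiff z) hσZ hc hdZmono B
      (hzsol lam).1 (hzsol eta).1 (hzsol lam).2 (hzsol eta).2
  have hdiff : (A (xsol lam) + B (zsol lam) - b) - (A (xsol eta) + B (zsol eta) - b)
      = A (xsol lam - xsol eta) + B (zsol lam - zsol eta) := by
    simp only [map_sub]
    abel
  calc ‖(A (xsol lam) + B (zsol lam) - b) - (A (xsol eta) + B (zsol eta) - b)‖
      ≤ ‖A‖ * ‖xsol lam - xsol eta‖ + ‖B‖ * ‖zsol lam - zsol eta‖ :=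
        hdiff ▸ (norm_add_le _ _).trans (add_le_add (A.le_opNorm _) (B.le_opNorm _))
    _ ≤ ‖A‖ * (‖A‖ / (c * σX) * ‖lam - eta‖) + ‖B‖ * (‖B‖ / (c * σZ) * ‖lam - eta‖) := by
        gcongr
    _ = (‖A‖ ^ 2 / (c * σX) + ‖B‖ ^ 2 / (c * σZ)) * ‖lam - eta‖ := by ring

/-- λ ↦ A x(λ) + B z(λ) − b is Lipschitz with constant
`L_c = ‖A‖²/(c σ_X) + ‖B‖²/(c σ_Z)`. -/
theorem gradient_map_lipschitz {n m p : ℕ}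
    (X : Set (EuclideanSpace ℝ (Fin m))) (Z : Set (EuclideanSpace ℝ (Fin p)))
    (hXne : X.Nonempty) (hXcomp : IsCompact X) (hXconv : Convex ℝ X)
    (hZne : Z.Nonempty) (hZcomp : IsCompact Z) (hZconv : Convex ℝ Z)
    (φ₁ : EuclideanSpace ℝ (Fin m) → ℝ) (φ₂ : EuclideanSpace ℝ (Fin p) → ℝ)
    (hφ₁diff : ∀ x, DifferentiableAt ℝ φ₁ x) (hφ₁conv : ConvexOn ℝ Set.univ φ₁)
    (hφ₂diff : ∀ z, DifferentiableAt ℝ φ₂ z) (hφ₂conv : ConvexOn ℝ Set.univ φ₂)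
    (A : EuclideanSpace ℝ (Fin m) →L[ℝ] EuclideanSpace ℝ (Fin n))
    (B : EuclideanSpace ℝ (Fin p) →L[ℝ] EuclideanSpace ℝ (Fin n))
    (b : EuclideanSpace ℝ (Fin n))
    (dX : EuclideanSpace ℝ (Fin m) → ℝ) (dZ : EuclideanSpace ℝ (Fin p) → ℝ)
    (hdXdiff : ∀ x, DifferentiableAt ℝ dX x) (hdZdiff : ∀ z, DifferentiableAt ℝ dZ z)
    (σX σZ : ℝ) (hσX : 0 < σX) (hσZ : 0 < σZ)
    (hdXmono : ∀ x ∈ X, ∀ y ∈ X,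
      σX * ‖x - y‖ ^ 2 ≤ ⟪gradient dX x - gradient dX y, x - y⟫)
    (hdZmono : ∀ z ∈ Z, ∀ w ∈ Z,
      σZ * ‖z - w‖ ^ 2 ≤ ⟪gradient dZ z - gradient dZ w, z - w⟫)
    (c : ℝ) (hc : 0 < c)
    (xsol : EuclideanSpace ℝ (Fin n) → EuclideanSpace ℝ (Fin m))
    (zsol : EuclideanSpace ℝ (Fin n) → EuclideanSpace ℝ (Fin p))
    (hxsol : ∀ lam, xsol lam ∈ X ∧
      IsMinOn (fun x => φ₁ x + ⟪lam, A x⟫ + c * dX x) X (xsol lam))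
    (hzsol : ∀ lam, zsol lam ∈ Z ∧
      IsMinOn (fun z => φ₂ z + ⟪lam, B z⟫ + c * dZ z) Z (zsol lam))
    (hxsol_unique : ∀ lam, ∀ x₀ ∈ X,
      IsMinOn (fun x => φ₁ x + ⟪lam, A x⟫ + c * dX x) X x₀ → x₀ = xsol lam)
    (hzsol_unique : ∀ lam, ∀ z₀ ∈ Z,
      IsMinOn (fun z => φ₂ z + ⟪lam, B z⟫ + c * dZ z) Z z₀ → z₀ = zsol lam)
    :
    ∀ lam eta : EuclideanSpace ℝ (Fin n),
      ‖(A (xsol lam) + B (zsol lam) - b) - (A (xsol eta) + B (zsol eta) - b)‖ ≤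
        (‖A‖ ^ 2 / (c * σX) + ‖B‖ ^ 2 / (c * σZ)) * ‖lam - eta‖ :=
  gradient_map_lipschitz_general X Z hXconv hZconv φ₁ φ₂ hφ₁diff hφ₁conv hφ₂diff hφ₂conv A B b dX dZ
    hdXdiff hdZdiff σX σZ hσX hσZ hdXmono hdZmono c hc xsol zsol hxsol hzsol
end

section
/- The smoothed dual function f_c is differentiable at every λ ∈ ℝⁿ with gradient ∇f_c(λ) = A x(λ) + B z(λ) − b, where x(λ) and z(λ) are the unique minimizers over X and Z of x ↦ φ₁(x) + ⟨λ, Ax⟩ + c·d_X(x) and z ↦ φ₂(z) + ⟨λ, Bz⟩ + c·d_Z(z). -/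
open scoped RealInnerProductSpace

/-- Quadratic growth at minimizer for strongly convex functions (combined inequality form). -/
lemma quad_growth_aux {E : Type*} [NormedAddCommGroup E] [InnerProductSpace ℝ E]
    (S : Set E) (hS : Convex ℝ S) (f : E → ℝ) (κ : ℝ)
    (hsc : ∀ x ∈ S, ∀ y ∈ S, ∀ t : ℝ, 0 ≤ t → t ≤ 1 →
      f (t • x + (1 - t) • y) ≤ t * f x + (1 - t) * f y - (κ / 2) * t * (1 - t) * ‖x - y‖ ^ 2)
    (x₀ : E) (hx₀ : x₀ ∈ S) (hmin : IsMinOn f S x₀) :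
    ∀ x ∈ S, (κ / 2) * ‖x - x₀‖ ^ 2 ≤ f x - f x₀ := by
  intro x hx
  have key : ∀ t : ℝ, 0 < t → t ≤ 1 →
      (κ / 2) * (1 - t) * ‖x - x₀‖ ^ 2 ≤ f x - f x₀ := by
    intro t ht ht1
    have hmem : t • x + (1 - t) • x₀ ∈ S :=
      hS hx hx₀ ht.le (by linarith) (by ring)
    have h1 : f x₀ ≤ f (t • x + (1 - t) • x₀) := hmin hmem
    have h2 := hsc x hx x₀ hx₀ t ht.le ht1
    have h4 : t * ((κ / 2) * (1 - t) * ‖x - x₀‖ ^ 2) ≤ t * (f x - f x₀) := by nlinarith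
    exact le_of_mul_le_mul_left h4 ht
  have hcont : Filter.Tendsto (fun t : ℝ => (κ / 2) * (1 - t) * ‖x - x₀‖ ^ 2)
      (nhdsWithin 0 (Set.Ioi 0)) (nhds ((κ / 2) * ‖x - x₀‖ ^ 2)) := by
    have : Filter.Tendsto (fun t : ℝ => (κ / 2) * (1 - t) * ‖x - x₀‖ ^ 2)
        (nhds 0) (nhds ((κ / 2) * (1 - 0) * ‖x - x₀‖ ^ 2)) := by
      apply Continuous.tendsto
      continuity
    simpa using this.mono_left nhdsWithin_le_nhds
  refine le_of_tendsto hcont ?_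
  filter_upwards [Ioc_mem_nhdsGT_of_mem (by norm_num : (0:ℝ) ∈ Set.Ico 0 1)] with t ht
  exact key t ht.1 ht.2

set_option maxHeartbeats 1000000 in
/-- `f_c` is differentiable with gradient `A x(λ) + B z(λ) − b`. -/
theorem smoothed_dual_hasGradient {n m p : ℕ}
    (X : Set (EuclideanSpace ℝ (Fin m))) (Z : Set (EuclideanSpace ℝ (Fin p)))
    (hXne : X.Nonempty) (hXcomp : IsCompact X) (hXconv : Convex ℝ X)
    (hZne : Z.Nonempty) (hZcomp : IsCompact Z) (hZconv : Convex ℝ Z)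
    (φ₁ : EuclideanSpace ℝ (Fin m) → ℝ) (φ₂ : EuclideanSpace ℝ (Fin p) → ℝ)
    (hφ₁cont : Continuous φ₁) (hφ₁conv : ConvexOn ℝ Set.univ φ₁)
    (hφ₂cont : Continuous φ₂) (hφ₂conv : ConvexOn ℝ Set.univ φ₂)
    (A : EuclideanSpace ℝ (Fin m) →L[ℝ] EuclideanSpace ℝ (Fin n))
    (B : EuclideanSpace ℝ (Fin p) →L[ℝ] EuclideanSpace ℝ (Fin n))
    (b : EuclideanSpace ℝ (Fin n))
    (dX : EuclideanSpace ℝ (Fin m) → ℝ) (dZ : EuclideanSpace ℝ (Fin p) → ℝ)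
    (hdXcont : Continuous dX) (hdZcont : Continuous dZ)
    (σX σZ : ℝ) (hσX : 0 < σX) (hσZ : 0 < σZ)
    (hdXsc : ∀ x ∈ X, ∀ y ∈ X, ∀ t : ℝ, 0 ≤ t → t ≤ 1 →
      dX (t • x + (1 - t) • y) ≤ t * dX x + (1 - t) * dX y - (σX / 2) * t * (1 - t) * ‖x - y‖ ^ 2)
    (hdZsc : ∀ z ∈ Z, ∀ w ∈ Z, ∀ t : ℝ, 0 ≤ t → t ≤ 1 →
      dZ (t • z + (1 - t) • w) ≤ t * dZ z + (1 - t) * dZ w - (σZ / 2) * t * (1 - t) * ‖z - w‖ ^ 2)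
    (c : ℝ) (hc : 0 < c)
    (fc : EuclideanSpace ℝ (Fin n) → ℝ)
    (hfc : ∀ lam : EuclideanSpace ℝ (Fin n),
      IsLeast ((fun q : EuclideanSpace ℝ (Fin m) × EuclideanSpace ℝ (Fin p) =>
        φ₁ q.1 + φ₂ q.2 + ⟪lam, A q.1 + B q.2 - b⟫ + c * (dX q.1 + dZ q.2)) '' (X ×ˢ Z))
        (fc lam))
    (xsol : EuclideanSpace ℝ (Fin n) → EuclideanSpace ℝ (Fin m))
    (zsol : EuclideanSpace ℝ (Fin n) → EuclideanSpace ℝ (Fin p))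
    (hxsol : ∀ lam, xsol lam ∈ X ∧
      IsMinOn (fun x => φ₁ x + ⟪lam, A x⟫ + c * dX x) X (xsol lam))
    (hzsol : ∀ lam, zsol lam ∈ Z ∧
      IsMinOn (fun z => φ₂ z + ⟪lam, B z⟫ + c * dZ z) Z (zsol lam))
    (hxsol_unique : ∀ lam, ∀ x₀ ∈ X,
      IsMinOn (fun x => φ₁ x + ⟪lam, A x⟫ + c * dX x) X x₀ → x₀ = xsol lam)
    (hzsol_unique : ∀ lam, ∀ z₀ ∈ Z,
      IsMinOn (fun z => φ₂ z + ⟪lam, B z⟫ + c * dZ z) Z z₀ → z₀ = zsol lam) :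
    ∀ lam : EuclideanSpace ℝ (Fin n),
      HasGradientAt fc (A (xsol lam) + B (zsol lam) - b) lam := by
  -- abbreviations
  obtain ⟨Gx, hGx⟩ : ∃ G : EuclideanSpace ℝ (Fin n) → EuclideanSpace ℝ (Fin m) → ℝ,
      G = fun l x => φ₁ x + ⟪l, A x⟫ + c * dX x := ⟨_, rfl⟩
  obtain ⟨Gz, hGz⟩ : ∃ G : EuclideanSpace ℝ (Fin n) → EuclideanSpace ℝ (Fin p) → ℝ,
      G = fun l z => φ₂ z + ⟪l, B z⟫ + c * dZ z := ⟨_, rfl⟩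
  obtain ⟨g, hg⟩ : ∃ G : EuclideanSpace ℝ (Fin n) → EuclideanSpace ℝ (Fin n),
      G = fun l => A (xsol l) + B (zsol l) - b := ⟨_, rfl⟩
  -- splitting identity
  have hsplit : ∀ (l : EuclideanSpace ℝ (Fin n)) x z,
      φ₁ x + φ₂ z + ⟪l, A x + B z - b⟫ + c * (dX x + dZ z)
        = Gx l x + Gz l z - ⟪l, b⟫ := by
    intro l x z
    simp only [hGx, hGz, inner_add_right, inner_sub_right]
    ring
  -- Step A: value of fc
  have hval : ∀ l : EuclideanSpace ℝ (Fin n),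
      fc l = Gx l (xsol l) + Gz l (zsol l) - ⟪l, b⟫ := by
    intro l
    obtain ⟨hmem, hlb⟩ := hfc l
    have hub : fc l ≤ Gx l (xsol l) + Gz l (zsol l) - ⟪l, b⟫ := by
      have h0 : fc l ≤ φ₁ (xsol l) + φ₂ (zsol l) + ⟪l, A (xsol l) + B (zsol l) - b⟫
          + c * (dX (xsol l) + dZ (zsol l)) :=
        hlb ⟨(xsol l, zsol l), ⟨(hxsol l).1, (hzsol l).1⟩, rfl⟩
      rwa [hsplit] at h0
    obtain ⟨q, hq, hqe⟩ := hmem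
    have h1 : Gx l (xsol l) ≤ Gx l q.1 := by
      rw [hGx]; exact (hxsol l).2 hq.1
    have h2 : Gz l (zsol l) ≤ Gz l q.2 := by
      rw [hGz]; exact (hzsol l).2 hq.2
    have hqe' : φ₁ q.1 + φ₂ q.2 + ⟪l, A q.1 + B q.2 - b⟫ + c * (dX q.1 + dZ q.2)
        = fc l := hqe
    rw [hsplit l q.1 q.2] at hqe'
    linarith
  -- Step B: subgradient inequality
  have hsub : ∀ l μ : EuclideanSpace ℝ (Fin n), fc μ ≤ fc l + ⟪μ - l, g l⟫ := by
    intro l μ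
    have hub : fc μ ≤ φ₁ (xsol l) + φ₂ (zsol l) + ⟪μ, A (xsol l) + B (zsol l) - b⟫
        + c * (dX (xsol l) + dZ (zsol l)) :=
      (hfc μ).2 ⟨(xsol l, zsol l), ⟨(hxsol l).1, (hzsol l).1⟩, rfl⟩
    have hl : fc l = φ₁ (xsol l) + φ₂ (zsol l) + ⟪l, A (xsol l) + B (zsol l) - b⟫
        + c * (dX (xsol l) + dZ (zsol l)) := by
      rw [hval l, hsplit]
    have hdiff : ⟪μ, A (xsol l) + B (zsol l) - b⟫ - ⟪l, A (xsol l) + B (zsol l) - b⟫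
        = ⟪μ - l, g l⟫ := by
      rw [hg, inner_sub_left]
    linarith
  -- strong convexity of Gx l on X
  have hGxsc : ∀ l : EuclideanSpace ℝ (Fin n), ∀ x ∈ X, ∀ y ∈ X, ∀ t : ℝ, 0 ≤ t → t ≤ 1 →
      Gx l (t • x + (1 - t) • y) ≤ t * Gx l x + (1 - t) * Gx l y
        - (c * σX / 2) * t * (1 - t) * ‖x - y‖ ^ 2 := by
    intro l x hx y hy t ht ht1
    have hφ : φ₁ (t • x + (1 - t) • y) ≤ t * φ₁ x + (1 - t) * φ₁ y :=
      hφ₁conv.2 (Set.mem_univ x) (Set.mem_univ y) ht (by linarith) (by ring)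
    have hlin : ⟪l, A (t • x + (1 - t) • y)⟫ = t * ⟪l, A x⟫ + (1 - t) * ⟪l, A y⟫ := by
      rw [map_add, map_smul, map_smul, inner_add_right, real_inner_smul_right,
        real_inner_smul_right]
    have hd := hdXsc x hx y hy t ht ht1
    have hd' : c * dX (t • x + (1 - t) • y) ≤
        c * (t * dX x + (1 - t) * dX y - (σX / 2) * t * (1 - t) * ‖x - y‖ ^ 2) :=
      mul_le_mul_of_nonneg_left hd hc.le
    simp only [hGx]
    rw [hlin]
    nlinarith [hφ, hd']
  have hGzsc : ∀ l : EuclideanSpace ℝ (Fin n), ∀ x ∈ Z, ∀ y ∈ Z, ∀ t : ℝ, 0 ≤ t → t ≤ 1 →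
      Gz l (t • x + (1 - t) • y) ≤ t * Gz l x + (1 - t) * Gz l y
        - (c * σZ / 2) * t * (1 - t) * ‖x - y‖ ^ 2 := by
    intro l x hx y hy t ht ht1
    have hφ : φ₂ (t • x + (1 - t) • y) ≤ t * φ₂ x + (1 - t) * φ₂ y :=
      hφ₂conv.2 (Set.mem_univ x) (Set.mem_univ y) ht (by linarith) (by ring)
    have hlin : ⟪l, B (t • x + (1 - t) • y)⟫ = t * ⟪l, B x⟫ + (1 - t) * ⟪l, B y⟫ := by
      rw [map_add, map_smul, map_smul, inner_add_right, real_inner_smul_right,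
        real_inner_smul_right]
    have hd := hdZsc x hx y hy t ht ht1
    have hd' : c * dZ (t • x + (1 - t) • y) ≤
        c * (t * dZ x + (1 - t) * dZ y - (σZ / 2) * t * (1 - t) * ‖x - y‖ ^ 2) :=
      mul_le_mul_of_nonneg_left hd hc.le
    simp only [hGz]
    rw [hlin]
    nlinarith [hφ, hd']
  -- quadratic growth
  have hqX : ∀ l : EuclideanSpace ℝ (Fin n), ∀ x ∈ X,
      (c * σX / 2) * ‖x - xsol l‖ ^ 2 ≤ Gx l x - Gx l (xsol l) :=
    fun l => quad_growth_aux X hXconv (Gx l) (c * σX) (hGxsc l) (xsol l) (hxsol l).1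
      (by rw [hGx]; exact (hxsol l).2)
  have hqZ : ∀ l : EuclideanSpace ℝ (Fin n), ∀ z ∈ Z,
      (c * σZ / 2) * ‖z - zsol l‖ ^ 2 ≤ Gz l z - Gz l (zsol l) :=
    fun l => quad_growth_aux Z hZconv (Gz l) (c * σZ) (hGzsc l) (zsol l) (hzsol l).1
      (by rw [hGz]; exact (hzsol l).2)
  -- Lipschitz continuity of the minimizers
  have hlipX : ∀ l μ : EuclideanSpace ℝ (Fin n),
      ‖xsol μ - xsol l‖ ≤ (‖A‖ / (c * σX)) * ‖μ - l‖ := by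
    intro l μ
    have h1 := hqX l (xsol μ) (hxsol μ).1
    have h2 := hqX μ (xsol l) (hxsol l).1
    rw [norm_sub_rev (xsol l)] at h2
    have hsum : Gx l (xsol μ) - Gx l (xsol l) + (Gx μ (xsol l) - Gx μ (xsol μ))
        = ⟪μ - l, A (xsol l) - A (xsol μ)⟫ := by
      simp only [hGx, inner_sub_left, inner_sub_right]
      ring
    have hin : ⟪μ - l, A (xsol l) - A (xsol μ)⟫ ≤ ‖μ - l‖ * (‖A‖ * ‖xsol μ - xsol l‖) := by
      calc ⟪μ - l, A (xsol l) - A (xsol μ)⟫ ≤ ‖μ - l‖ * ‖A (xsol l) - A (xsol μ)‖ :=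
            real_inner_le_norm _ _
        _ ≤ ‖μ - l‖ * (‖A‖ * ‖xsol μ - xsol l‖) := by
            rw [← map_sub, norm_sub_rev (xsol μ) (xsol l)]
            exact mul_le_mul_of_nonneg_left (A.le_opNorm _) (norm_nonneg _)
    have hkey : c * σX * ‖xsol μ - xsol l‖ ^ 2 ≤ ‖μ - l‖ * (‖A‖ * ‖xsol μ - xsol l‖) := by
      have h3 : c * σX * ‖xsol μ - xsol l‖ ^ 2
          ≤ Gx l (xsol μ) - Gx l (xsol l) + (Gx μ (xsol l) - Gx μ (xsol μ)) := by linarith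
      rw [hsum] at h3
      exact h3.trans hin
    rcases eq_or_lt_of_le (norm_nonneg (xsol μ - xsol l)) with h0 | h0
    · rw [← h0]
      positivity
    · rw [div_mul_eq_mul_div, le_div_iff₀ (mul_pos hc hσX)]
      have h5 : c * σX * ‖xsol μ - xsol l‖ * ‖xsol μ - xsol l‖
          ≤ ‖μ - l‖ * ‖A‖ * ‖xsol μ - xsol l‖ := by nlinarith
      have := le_of_mul_le_mul_right h5 h0
      nlinarith
  have hlipZ : ∀ l μ : EuclideanSpace ℝ (Fin n),
      ‖zsol μ - zsol l‖ ≤ (‖B‖ / (c * σZ)) * ‖μ - l‖ := by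
    intro l μ
    have h1 := hqZ l (zsol μ) (hzsol μ).1
    have h2 := hqZ μ (zsol l) (hzsol l).1
    rw [norm_sub_rev (zsol l)] at h2
    have hsum : Gz l (zsol μ) - Gz l (zsol l) + (Gz μ (zsol l) - Gz μ (zsol μ))
        = ⟪μ - l, B (zsol l) - B (zsol μ)⟫ := by
      simp only [hGz, inner_sub_left, inner_sub_right]
      ring
    have hin : ⟪μ - l, B (zsol l) - B (zsol μ)⟫ ≤ ‖μ - l‖ * (‖B‖ * ‖zsol μ - zsol l‖) := by
      calc ⟪μ - l, B (zsol l) - B (zsol μ)⟫ ≤ ‖μ - l‖ * ‖B (zsol l) - B (zsol μ)‖ :=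
            real_inner_le_norm _ _
        _ ≤ ‖μ - l‖ * (‖B‖ * ‖zsol μ - zsol l‖) := by
            rw [← map_sub, norm_sub_rev (zsol μ) (zsol l)]
            exact mul_le_mul_of_nonneg_left (B.le_opNorm _) (norm_nonneg _)
    have hkey : c * σZ * ‖zsol μ - zsol l‖ ^ 2 ≤ ‖μ - l‖ * (‖B‖ * ‖zsol μ - zsol l‖) := by
      have h3 : c * σZ * ‖zsol μ - zsol l‖ ^ 2
          ≤ Gz l (zsol μ) - Gz l (zsol l) + (Gz μ (zsol l) - Gz μ (zsol μ)) := by linarith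
      rw [hsum] at h3
      exact h3.trans hin
    rcases eq_or_lt_of_le (norm_nonneg (zsol μ - zsol l)) with h0 | h0
    · rw [← h0]
      positivity
    · rw [div_mul_eq_mul_div, le_div_iff₀ (mul_pos hc hσZ)]
      have h5 : c * σZ * ‖zsol μ - zsol l‖ * ‖zsol μ - zsol l‖
          ≤ ‖μ - l‖ * ‖B‖ * ‖zsol μ - zsol l‖ := by nlinarith
      have := le_of_mul_le_mul_right h5 h0
      nlinarith
  -- Lipschitz continuity of g
  obtain ⟨K, hK⟩ : ∃ K : ℝ, K = ‖A‖ * (‖A‖ / (c * σX)) + ‖B‖ * (‖B‖ / (c * σZ)) := ⟨_, rfl⟩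
  have hK0 : 0 ≤ K := by rw [hK]; positivity
  have hglip : ∀ l μ : EuclideanSpace ℝ (Fin n), ‖g μ - g l‖ ≤ K * ‖μ - l‖ := by
    intro l μ
    have hdecomp : g μ - g l = A (xsol μ - xsol l) + B (zsol μ - zsol l) := by
      simp only [hg, map_sub]
      abel
    rw [hdecomp]
    calc ‖A (xsol μ - xsol l) + B (zsol μ - zsol l)‖
        ≤ ‖A (xsol μ - xsol l)‖ + ‖B (zsol μ - zsol l)‖ := norm_add_le _ _
      _ ≤ ‖A‖ * ‖xsol μ - xsol l‖ + ‖B‖ * ‖zsol μ - zsol l‖ :=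
          add_le_add (A.le_opNorm _) (B.le_opNorm _)
      _ ≤ ‖A‖ * ((‖A‖ / (c * σX)) * ‖μ - l‖) + ‖B‖ * ((‖B‖ / (c * σZ)) * ‖μ - l‖) :=
          add_le_add (mul_le_mul_of_nonneg_left (hlipX l μ) (norm_nonneg _))
            (mul_le_mul_of_nonneg_left (hlipZ l μ) (norm_nonneg _))
      _ = K * ‖μ - l‖ := by rw [hK]; ring
  -- final bound
  intro lam
  have hbound : ∀ μ : EuclideanSpace ℝ (Fin n),
      |fc μ - fc lam - ⟪g lam, μ - lam⟫| ≤ K * ‖μ - lam‖ ^ 2 := by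
    intro μ
    have hcomm : ⟪g lam, μ - lam⟫ = ⟪μ - lam, g lam⟫ := real_inner_comm _ _
    have hupper : fc μ - fc lam - ⟪g lam, μ - lam⟫ ≤ 0 := by
      have := hsub lam μ
      rw [hcomm]; linarith
    have hlower : -(K * ‖μ - lam‖ ^ 2) ≤ fc μ - fc lam - ⟪g lam, μ - lam⟫ := by
      have h1 := hsub μ lam
      have h2 : ⟪lam - μ, g μ⟫ = -⟪μ - lam, g μ⟫ := by
        rw [← inner_neg_left, neg_sub]
      have h3 : ⟪μ - lam, g μ⟫ - ⟪μ - lam, g lam⟫ = ⟪μ - lam, g μ - g lam⟫ := by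
        rw [inner_sub_right]
      have h4 : -(‖μ - lam‖ * ‖g μ - g lam‖) ≤ ⟪μ - lam, g μ - g lam⟫ :=
        neg_le_of_neg_le (by
          have := real_inner_le_norm (μ - lam) (g lam - g μ)
          rw [← neg_sub (g μ) (g lam), inner_neg_right] at this
          linarith [(norm_neg (g μ - g lam)).symm ▸ this,
            norm_sub_rev (g lam) (g μ)])
      have h5 : ‖μ - lam‖ * ‖g μ - g lam‖ ≤ K * ‖μ - lam‖ ^ 2 := by
        have := hglip lam μ
        nlinarith [norm_nonneg (μ - lam)]
      rw [hcomm]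
      linarith
    rw [abs_le]
    constructor
    · linarith
    · nlinarith [norm_nonneg (μ - lam), sq_nonneg ‖μ - lam‖]
  have hglam : A (xsol lam) + B (zsol lam) - b = g lam := by rw [hg]
  rw [hglam, hasGradientAt_iff_isLittleO]
  rw [Asymptotics.isLittleO_iff]
  intro ε hε
  have hball : Metric.ball lam (ε / (K + 1)) ∈ nhds lam :=
    Metric.ball_mem_nhds lam (by positivity)
  filter_upwards [hball] with μ hμ
  have hd : ‖μ - lam‖ < ε / (K + 1) := by
    rwa [Metric.mem_ball, dist_eq_norm] at hμ
  have hb := hbound μ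
  have : K * ‖μ - lam‖ ^ 2 ≤ ε * ‖μ - lam‖ := by
    have h1 : ‖μ - lam‖ * (K + 1) ≤ ε := by
      rw [← le_div_iff₀ (by positivity : (0:ℝ) < K + 1)]
      exact hd.le
    nlinarith [norm_nonneg (μ - lam)]
  show ‖fc μ - fc lam - ⟪g lam, μ - lam⟫‖ ≤ ε * ‖μ - lam‖
  calc ‖fc μ - fc lam - ⟪g lam, μ - lam⟫‖ = |fc μ - fc lam - ⟪g lam, μ - lam⟫| := rfl
    _ ≤ K * ‖μ - lam‖ ^ 2 := hb
    _ ≤ ε * ‖μ - lam‖ := this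
    _ = ε * ‖μ - lam‖ := rfl
end

section
/- Suppose points u⁰, …, u^k ∈ Q and λ̂ ∈ Q satisfy the estimate-sequence inequality ((k+1)(k+2)/4)·f_c(λ̂) ≥ max_{λ ∈ Q} { −(L/σ_Q)·d_Q(λ) + Σ_{l=0}^{k} ((l+1)/2)·[f_c(u^l) + ⟨A x^{l+1} + B z^{l+1} − b, λ − u^l⟩] }, where x^{l+1} ∈ X and z^{l+1} ∈ Z are the minimizers defining f_c(u^l), i.e. f_c(u^l) = φ₁(x^{l+1}) + φ₂(z^{l+1}) + ⟨u^l, A x^{l+1} + B z^{l+1} − b⟩ + c(d_X(x^{l+1}) + d_Z(z^{l+1})). Set x̂ = Σ_{l=0}^{k} (2(l+1)/((k+1)(k+2)))·x^{l+1} and ẑ = Σ_{l=0}^{k} (2(l+1)/((k+1)(k+2)))·z^{l+1}. Then the duality gap satisfies [φ₁(x̂) + φ₂(ẑ)] − f_0(λ̂) ≤ c(D_X + D_Z) − max_{λ ∈ Q} [ −(4L/(σ_Q(k+1)²))·d_Q(λ) + ⟨A x̂ + B ẑ − b, λ⟩ ]. -/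
/-!
For fixed `λ` the Lagrangian `ℒ(x, z; λ) = φ₁ x + φ₂ z + ⟪λ, A x + B z - b⟫` is convex in
`(x, z)` and affine in `λ`, so each term of the estimate sequence satisfies
`f_c(uˡ) + ⟪A xˡ⁺¹ + B zˡ⁺¹ - b, λ - uˡ⟫ = ℒ(xˡ⁺¹, zˡ⁺¹; λ) + c (d_X + d_Z) ≥ ℒ(xˡ⁺¹, zˡ⁺¹; λ)`.
The weights `(l + 1) / 2` sum to `S = (k + 1)(k + 2) / 4` and `(x̂, ẑ)` is their barycentre, so
Jensen bounds the weighted sum from below by `S ℒ(x̂, ẑ; λ)`. On the other side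
`f_c ≤ f_0 + c (D_X + D_Z)` and `L / σ_Q ≤ S · 4L / (σ_Q (k + 1)²)`; dividing by `S` gives the gap.
-/

open scoped RealInnerProductSpace
open Finset Set

variable {E F H : Type*} [NormedAddCommGroup E] [NormedSpace ℝ E] [NormedAddCommGroup F]
  [NormedSpace ℝ F] [NormedAddCommGroup H] [InnerProductSpace ℝ H]

section
variable (φ₁ : E → ℝ) (φ₂ : F → ℝ) (A : E →L[ℝ] H) (B : F →L[ℝ] H) (b : H)

def lagrangian (lam : H) (q : E × F) : ℝ := φ₁ q.1 + φ₂ q.2 + ⟪lam, A q.1 + B q.2 - b⟫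

variable {φ₁ φ₂}

theorem convexOn_lagrangian (hφ₁ : ConvexOn ℝ univ φ₁) (hφ₂ : ConvexOn ℝ univ φ₂) (lam : H) :
    ConvexOn ℝ univ (lagrangian φ₁ φ₂ A B b lam) := by
  have hlin : ConvexOn ℝ univ fun q : E × F => ⟪lam, A q.1 + B q.2⟫ :=
    ((innerSL ℝ lam).comp (A.coprod B)).toLinearMap.convexOn convex_univ
  have hsplit : lagrangian φ₁ φ₂ A B b lam =
      φ₁ ∘ LinearMap.fst ℝ E F + φ₂ ∘ LinearMap.snd ℝ E F +
        fun q => ⟪lam, A q.1 + B q.2⟫ + -⟪lam, b⟫ := by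
    funext q
    simp only [lagrangian, Pi.add_apply, Function.comp_apply, LinearMap.fst_apply,
      LinearMap.snd_apply, inner_sub_right]
    ring
  rw [hsplit]
  exact ((hφ₁.comp_linearMap _).add (hφ₂.comp_linearMap _)).add (hlin.add_const _)

theorem lagrangian_add_inner_sub (lam u : H) (q : E × F) :
    lagrangian φ₁ φ₂ A B b u q + ⟪A q.1 + B q.2 - b, lam - u⟫ = lagrangian φ₁ φ₂ A B b lam q := by
  simp only [lagrangian, real_inner_comm (A q.1 + B q.2 - b), inner_sub_right]
  ring

theorem lagrangian_le_add_inner_sub {u lam : H} {q : E × F} {v r : ℝ}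
    (hv : v = lagrangian φ₁ φ₂ A B b u q + r) (hr : 0 ≤ r) :
    lagrangian φ₁ φ₂ A B b lam q ≤ v + ⟪A q.1 + B q.2 - b, lam - u⟫ := by
  rw [hv, ← lagrangian_add_inner_sub]
  linarith

end

theorem le_add_of_mem_lowerBounds_image {α : Type*} {s : Set α} {f g : α → ℝ} {a b C : ℝ}
    (ha : a ∈ lowerBounds (f '' s)) (hb : b ∈ g '' s) (hfg : ∀ q ∈ s, f q ≤ g q + C) :
    a ≤ b + C := by
  obtain ⟨q, hq, rfl⟩ := hb
  exact (ha ⟨q, hq, rfl⟩).trans (hfg q hq)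

theorem ConvexOn.sum_mul_map_sum_div_smul_le {ι V : Type*} [AddCommGroup V] [Module ℝ V]
    {f : V → ℝ} (hf : ConvexOn ℝ univ f) {t : Finset ι} {w : ι → ℝ} (hw : ∀ i ∈ t, 0 ≤ w i)
    (hW : 0 < ∑ i ∈ t, w i) (y : ι → V) :
    (∑ i ∈ t, w i) * f (∑ i ∈ t, (w i / ∑ j ∈ t, w j) • y i) ≤ ∑ i ∈ t, w i * f (y i) := by
  have := hf.map_centerMass_le hw hW (fun i _ => mem_univ (y i))
  simp only [Finset.centerMass, Finset.smul_sum, smul_smul, smul_eq_mul] at this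
  rw [← le_div_iff₀' hW]
  convert this using 2
  · exact Finset.sum_congr rfl fun i _ => by rw [div_eq_inv_mul]
  · rw [div_eq_inv_mul]; rfl

theorem sum_range_succ_add_one_div_two (k : ℕ) :
    ∑ l ∈ range (k + 1), ((l : ℝ) + 1) / 2 = ((k : ℝ) + 1) * ((k : ℝ) + 2) / 4 := by
  induction k with
  | zero => norm_num
  | succ k ih => rw [Finset.sum_range_succ, ih]; push_cast; ring

theorem ConvexOn.mul_map_sum_linear_weights_le {V : Type*} [AddCommGroup V] [Module ℝ V]
    {f : V → ℝ} (hf : ConvexOn ℝ univ f) (k : ℕ) (y : ℕ → V) :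
    ((k : ℝ) + 1) * ((k : ℝ) + 2) / 4 *
        f (∑ l ∈ range (k + 1), (2 * ((l : ℝ) + 1) / (((k : ℝ) + 1) * ((k : ℝ) + 2))) • y l) ≤
      ∑ l ∈ range (k + 1), ((l : ℝ) + 1) / 2 * f (y l) := by
  have hW := sum_range_succ_add_one_div_two k
  have := hf.sum_mul_map_sum_div_smul_le (t := range (k + 1)) (w := fun l => ((l : ℝ) + 1) / 2)
    (fun l _ => by positivity) (by rw [hW]; positivity) y
  rw [hW] at this
  convert this using 5 with l
  field_simp
  ring

theorem div_le_mul_div_sq {L σ : ℝ} (hσ : 0 < σ) (hL : 0 ≤ L) (k : ℕ) :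
    L / σ ≤ ((k : ℝ) + 1) * ((k : ℝ) + 2) / 4 * (4 * L / (σ * ((k : ℝ) + 1) ^ 2)) := by
  rw [show ((k : ℝ) + 1) * ((k : ℝ) + 2) / 4 * (4 * L / (σ * ((k : ℝ) + 1) ^ 2))
    = L / σ * (((k : ℝ) + 2) / ((k : ℝ) + 1)) by field_simp]
  refine le_mul_of_one_le_right (div_nonneg hL hσ.le) ?_
  rw [one_le_div (by positivity)]
  linarith

theorem duality_gap_bound_general {n m p : ℕ}
    (X : Set (EuclideanSpace ℝ (Fin m))) (Z : Set (EuclideanSpace ℝ (Fin p)))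
    (φ₁ : EuclideanSpace ℝ (Fin m) → ℝ) (φ₂ : EuclideanSpace ℝ (Fin p) → ℝ)
    (hφ₁conv : ConvexOn ℝ Set.univ φ₁)
    (hφ₂conv : ConvexOn ℝ Set.univ φ₂)
    (A : EuclideanSpace ℝ (Fin m) →L[ℝ] EuclideanSpace ℝ (Fin n))
    (B : EuclideanSpace ℝ (Fin p) →L[ℝ] EuclideanSpace ℝ (Fin n))
    (b : EuclideanSpace ℝ (Fin n))
    (dX : EuclideanSpace ℝ (Fin m) → ℝ) (dZ : EuclideanSpace ℝ (Fin p) → ℝ)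
    (hdXnn : ∀ x, 0 ≤ dX x)
    (hdZnn : ∀ z, 0 ≤ dZ z)
    (c : ℝ) (hc : 0 < c)
    (DX DZ : ℝ) (hDX : ∀ x ∈ X, dX x ≤ DX) (hDZ : ∀ z ∈ Z, dZ z ≤ DZ)
    (f0 : EuclideanSpace ℝ (Fin n) → ℝ)
    (hf0 : ∀ lam : EuclideanSpace ℝ (Fin n),
      IsLeast ((fun q : EuclideanSpace ℝ (Fin m) × EuclideanSpace ℝ (Fin p) =>
        φ₁ q.1 + φ₂ q.2 + ⟪lam, A q.1 + B q.2 - b⟫) '' (X ×ˢ Z)) (f0 lam))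
    (fc : EuclideanSpace ℝ (Fin n) → ℝ)
    (hfc : ∀ lam : EuclideanSpace ℝ (Fin n),
      IsLeast ((fun q : EuclideanSpace ℝ (Fin m) × EuclideanSpace ℝ (Fin p) =>
        φ₁ q.1 + φ₂ q.2 + ⟪lam, A q.1 + B q.2 - b⟫ + c * (dX q.1 + dZ q.2)) '' (X ×ˢ Z))
        (fc lam))
    (Q : Set (EuclideanSpace ℝ (Fin n)))
    (dQ : EuclideanSpace ℝ (Fin n) → ℝ) (hdQnn : ∀ lam, 0 ≤ dQ lam)
    (σQ L : ℝ) (hσQ : 0 < σQ) (hL : 0 < L) (k : ℕ)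
    (u : ℕ → EuclideanSpace ℝ (Fin n))
    (lamhat : EuclideanSpace ℝ (Fin n))
    (x : ℕ → EuclideanSpace ℝ (Fin m)) (z : ℕ → EuclideanSpace ℝ (Fin p))
    (hxz : ∀ l ≤ k, x (l + 1) ∈ X ∧ z (l + 1) ∈ Z ∧
      fc (u l) = φ₁ (x (l + 1)) + φ₂ (z (l + 1)) +
        ⟪u l, A (x (l + 1)) + B (z (l + 1)) - b⟫ +
        c * (dX (x (l + 1)) + dZ (z (l + 1))))
    (hest : ∀ lam ∈ Q,
      -(L / σQ) * dQ lam + ∑ l ∈ Finset.range (k + 1), (((l : ℝ) + 1) / 2) *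
          (fc (u l) + ⟪A (x (l + 1)) + B (z (l + 1)) - b, lam - u l⟫) ≤
        (((k : ℝ) + 1) * ((k : ℝ) + 2) / 4) * fc lamhat)
    (xhat : EuclideanSpace ℝ (Fin m)) (zhat : EuclideanSpace ℝ (Fin p))
    (hxhat : xhat = ∑ l ∈ Finset.range (k + 1),
      (2 * ((l : ℝ) + 1) / (((k : ℝ) + 1) * ((k : ℝ) + 2))) • x (l + 1))
    (hzhat : zhat = ∑ l ∈ Finset.range (k + 1),
      (2 * ((l : ℝ) + 1) / (((k : ℝ) + 1) * ((k : ℝ) + 2))) • z (l + 1)) :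
    ∀ lam ∈ Q,
      (φ₁ xhat + φ₂ zhat) - f0 lamhat ≤ c * (DX + DZ) -
        (-(4 * L / (σQ * ((k : ℝ) + 1) ^ 2)) * dQ lam + ⟪A xhat + B zhat - b, lam⟫) := by
  intro lam hlam
  have hhat : (xhat, zhat) = ∑ l ∈ range (k + 1),
      (2 * ((l : ℝ) + 1) / (((k : ℝ) + 1) * ((k : ℝ) + 2))) • (x (l + 1), z (l + 1)) := by
    simp only [hxhat, hzhat, Prod.ext_iff, Prod.fst_sum, Prod.snd_sum, Prod.smul_fst,
      Prod.smul_snd, and_self]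
  have hjensen := hhat ▸
    (convexOn_lagrangian A B b hφ₁conv hφ₂conv lam).mul_map_sum_linear_weights_le k
      fun l => (x (l + 1), z (l + 1))
  have hlinearize : ∑ l ∈ range (k + 1), ((l : ℝ) + 1) / 2 *
        lagrangian φ₁ φ₂ A B b lam (x (l + 1), z (l + 1)) ≤
      ∑ l ∈ range (k + 1), ((l : ℝ) + 1) / 2 *
        (fc (u l) + ⟪A (x (l + 1)) + B (z (l + 1)) - b, lam - u l⟫) :=
    sum_le_sum fun l hl => mul_le_mul_of_nonneg_left
      (lagrangian_le_add_inner_sub A B b (hxz l (Nat.lt_succ_iff.mp (mem_range.mp hl))).2.2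
        (mul_nonneg hc.le (add_nonneg (hdXnn _) (hdZnn _)))) (by positivity)
  have hfc_le : fc lamhat ≤ f0 lamhat + c * (DX + DZ) :=
    le_add_of_mem_lowerBounds_image (hfc lamhat).2 (hf0 lamhat).1 fun q hq => by
      gcongr
      exacts [hDX _ hq.1, hDZ _ hq.2]
  set S : ℝ := ((k : ℝ) + 1) * ((k : ℝ) + 2) / 4
  have hSpos : 0 < S := by positivity
  have hcoef : L / σQ * dQ lam ≤ S * (4 * L / (σQ * ((k : ℝ) + 1) ^ 2)) * dQ lam :=
    mul_le_mul_of_nonneg_right (div_le_mul_div_sq hσQ hL.le k) (hdQnn lam)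
  have hgap : lagrangian φ₁ φ₂ A B b lam (xhat, zhat) ≤
      f0 lamhat + c * (DX + DZ) + 4 * L / (σQ * ((k : ℝ) + 1) ^ 2) * dQ lam := by
    refine le_of_mul_le_mul_left ?_ hSpos
    linarith [hest lam hlam, mul_le_mul_of_nonneg_left hfc_le hSpos.le]
  rw [real_inner_comm]
  simp only [lagrangian] at hgap
  linarith

/-- the duality-gap bound of Theorem 3. -/
theorem duality_gap_bound {n m p : ℕ}
    (X : Set (EuclideanSpace ℝ (Fin m))) (Z : Set (EuclideanSpace ℝ (Fin p)))
    (hXne : X.Nonempty) (hXcomp : IsCompact X) (hXconv : Convex ℝ X)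
    (hZne : Z.Nonempty) (hZcomp : IsCompact Z) (hZconv : Convex ℝ Z)
    (φ₁ : EuclideanSpace ℝ (Fin m) → ℝ) (φ₂ : EuclideanSpace ℝ (Fin p) → ℝ)
    (hφ₁cont : Continuous φ₁) (hφ₁conv : ConvexOn ℝ Set.univ φ₁)
    (hφ₂cont : Continuous φ₂) (hφ₂conv : ConvexOn ℝ Set.univ φ₂)
    (A : EuclideanSpace ℝ (Fin m) →L[ℝ] EuclideanSpace ℝ (Fin n))
    (B : EuclideanSpace ℝ (Fin p) →L[ℝ] EuclideanSpace ℝ (Fin n))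
    (b : EuclideanSpace ℝ (Fin n))
    (dX : EuclideanSpace ℝ (Fin m) → ℝ) (dZ : EuclideanSpace ℝ (Fin p) → ℝ)
    (hdXcont : Continuous dX) (hdXnn : ∀ x, 0 ≤ dX x)
    (hdZcont : Continuous dZ) (hdZnn : ∀ z, 0 ≤ dZ z)
    (c : ℝ) (hc : 0 < c)
    (DX DZ : ℝ) (hDX : ∀ x ∈ X, dX x ≤ DX) (hDZ : ∀ z ∈ Z, dZ z ≤ DZ)
    (f0 : EuclideanSpace ℝ (Fin n) → ℝ)
    (hf0 : ∀ lam : EuclideanSpace ℝ (Fin n),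
      IsLeast ((fun q : EuclideanSpace ℝ (Fin m) × EuclideanSpace ℝ (Fin p) =>
        φ₁ q.1 + φ₂ q.2 + ⟪lam, A q.1 + B q.2 - b⟫) '' (X ×ˢ Z)) (f0 lam))
    (fc : EuclideanSpace ℝ (Fin n) → ℝ)
    (hfc : ∀ lam : EuclideanSpace ℝ (Fin n),
      IsLeast ((fun q : EuclideanSpace ℝ (Fin m) × EuclideanSpace ℝ (Fin p) =>
        φ₁ q.1 + φ₂ q.2 + ⟪lam, A q.1 + B q.2 - b⟫ + c * (dX q.1 + dZ q.2)) '' (X ×ˢ Z))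
        (fc lam))
    (Q : Set (EuclideanSpace ℝ (Fin n))) (hQclosed : IsClosed Q) (hQconv : Convex ℝ Q)
    (dQ : EuclideanSpace ℝ (Fin n) → ℝ) (hdQcont : Continuous dQ) (hdQnn : ∀ lam, 0 ≤ dQ lam)
    (σQ L : ℝ) (hσQ : 0 < σQ) (hL : 0 < L) (k : ℕ)
    (u : ℕ → EuclideanSpace ℝ (Fin n)) (hu : ∀ l ≤ k, u l ∈ Q)
    (lamhat : EuclideanSpace ℝ (Fin n)) (hlamhatQ : lamhat ∈ Q)
    (x : ℕ → EuclideanSpace ℝ (Fin m)) (z : ℕ → EuclideanSpace ℝ (Fin p))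
    (hxz : ∀ l ≤ k, x (l + 1) ∈ X ∧ z (l + 1) ∈ Z ∧
      fc (u l) = φ₁ (x (l + 1)) + φ₂ (z (l + 1)) +
        ⟪u l, A (x (l + 1)) + B (z (l + 1)) - b⟫ +
        c * (dX (x (l + 1)) + dZ (z (l + 1))))
    (hest : ∀ lam ∈ Q,
      -(L / σQ) * dQ lam + ∑ l ∈ Finset.range (k + 1), (((l : ℝ) + 1) / 2) *
          (fc (u l) + ⟪A (x (l + 1)) + B (z (l + 1)) - b, lam - u l⟫) ≤
        (((k : ℝ) + 1) * ((k : ℝ) + 2) / 4) * fc lamhat)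
    (xhat : EuclideanSpace ℝ (Fin m)) (zhat : EuclideanSpace ℝ (Fin p))
    (hxhat : xhat = ∑ l ∈ Finset.range (k + 1),
      (2 * ((l : ℝ) + 1) / (((k : ℝ) + 1) * ((k : ℝ) + 2))) • x (l + 1))
    (hzhat : zhat = ∑ l ∈ Finset.range (k + 1),
      (2 * ((l : ℝ) + 1) / (((k : ℝ) + 1) * ((k : ℝ) + 2))) • z (l + 1)) :
    ∀ lam ∈ Q,
      (φ₁ xhat + φ₂ zhat) - f0 lamhat ≤ c * (DX + DZ) -
        (-(4 * L / (σQ * ((k : ℝ) + 1) ^ 2)) * dQ lam + ⟪A xhat + B zhat - b, lam⟫) :=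
  duality_gap_bound_general X Z φ₁ φ₂ hφ₁conv hφ₂conv A B b dX dZ hdXnn hdZnn c hc DX DZ hDX hDZ f0
    hf0 fc hfc Q dQ hdQnn σQ L hσQ hL k u lamhat x z hxz hest xhat zhat hxhat hzhat
end

section
/- Assume the set Λ* = {λ ∈ ℝⁿ : f_0(λ) = f*} of optimal Lagrange multipliers is nonempty and bounded, where f* = max_{λ ∈ ℝⁿ} f_0(λ). Then for every c > 0 and every λ⁰ ∈ ℝⁿ, the superlevel set {λ ∈ ℝⁿ : f_c(λ) ≥ f_c(λ⁰)} is bounded; consequently, any sequence {λ^k}_{k ≥ 0} along which f_c is nondecreasing (f_c(λ^{k+1}) ≥ f_c(λ^k) for all k) is bounded. -/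
/-!
Each `f_c` exceeds `f_0` by at most `c (D_X + D_Z)`, so every superlevel set of `f_c` lies in a
superlevel set of `f_0`. The dual function `f_0` is a pointwise minimum of affine functions of `λ`,
hence concave, and therefore continuous on `ℝⁿ`. A concave function whose set of maximizers is
nonempty and bounded has bounded superlevel sets: on a sphere around a maximizer enclosing all
maximizers it stays some `δ > 0` below its maximum (compactness), and concavity turns this into a
decay at least linear in the distance along every ray leaving the sphere.
-/

open Bornology Metric Set
open scoped RealInnerProductSpace

theorem concaveOn_of_isLeast_image {ι E : Type*} [AddCommMonoid E] [Module ℝ E]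
    {s : Set E} (hs : Convex ℝ s) {S : Set ι} {F : ι → E → ℝ} {f : E → ℝ}
    (hF : ∀ i ∈ S, ConcaveOn ℝ s (F i)) (hf : ∀ x ∈ s, IsLeast ((F · x) '' S) (f x)) :
    ConcaveOn ℝ s f := by
  refine ⟨hs, fun x hx y hy a b ha hb hab => ?_⟩
  obtain ⟨i, hi, hfi⟩ := (hf _ (hs hx hy ha hb hab)).1
  have hx' : f x ≤ F i x := (hf x hx).2 (mem_image_of_mem _ hi)
  have hy' : f y ≤ F i y := (hf y hy).2 (mem_image_of_mem _ hi)
  calc a • f x + b • f y ≤ a • F i x + b • F i y := by gcongr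
    _ ≤ F i (a • x + b • y) := (hF i hi).2 hx hy ha hb hab
    _ = f (a • x + b • y) := hfi

theorem IsCompact.exists_pos_forall_add_le {α : Type*} [TopologicalSpace α] {K : Set α}
    (hK : IsCompact K) {f : α → ℝ} (hf : ContinuousOn f K) {M : ℝ} (hlt : ∀ y ∈ K, f y < M) :
    ∃ δ > 0, ∀ y ∈ K, f y + δ ≤ M := by
  rcases K.eq_empty_or_nonempty with rfl | hne
  · exact ⟨1, one_pos, by simp⟩
  obtain ⟨y₀, hy₀, hmax⟩ := hK.exists_isMaxOn hne hf
  exact ⟨M - f y₀, sub_pos.2 (hlt y₀ hy₀), fun y hy =>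
    by linarith [show f y ≤ f y₀ from hmax hy]⟩

theorem IsLeast.le_add_of_lowerBound_add {ι : Type*} {S : Set ι} {g e : ι → ℝ} {a a' C : ℝ}
    (ha : IsLeast (g '' S) a) (ha' : a' ∈ lowerBounds ((fun i => g i + e i) '' S))
    (he : ∀ i ∈ S, e i ≤ C) : a' ≤ a + C := by
  obtain ⟨i, hi, rfl⟩ := ha.1
  linarith [ha' (mem_image_of_mem _ hi), he i hi]

section Normed

variable {E : Type*} [NormedAddCommGroup E] [NormedSpace ℝ E] {f : E → ℝ}

theorem ConcaveOn.mul_norm_sub_le_of_sphere (hf : ConcaveOn ℝ univ f) {x₀ x : E} {r δ : ℝ}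
    (hr : 0 < r) (hx : r ≤ ‖x - x₀‖) (hsphere : ∀ y ∈ sphere x₀ r, f y + δ ≤ f x₀) :
    δ * ‖x - x₀‖ ≤ r * (f x₀ - f x) := by
  have hnorm : 0 < ‖x - x₀‖ := hr.trans_le hx
  set t := r / ‖x - x₀‖ with ht
  have ht0 : 0 < t := div_pos hr hnorm
  have ht1 : t ≤ 1 := (div_le_one hnorm).2 hx
  have hy : x₀ + t • (x - x₀) ∈ sphere x₀ r := by
    rw [mem_sphere_iff_norm, add_sub_cancel_left, norm_smul, Real.norm_of_nonneg ht0.le, ht,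
      div_mul_cancel₀ _ hnorm.ne']
  have hconc : (1 - t) * f x₀ + t * f x ≤ f (x₀ + t • (x - x₀)) := by
    have := hf.2 (mem_univ x₀) (mem_univ x) (sub_nonneg.2 ht1) ht0.le (sub_add_cancel 1 t)
    rwa [show (1 - t) • x₀ + t • x = x₀ + t • (x - x₀) by module, smul_eq_mul, smul_eq_mul]
      at this
  have hdrop : δ ≤ t * (f x₀ - f x) := by linarith [hsphere _ hy]
  calc δ * ‖x - x₀‖ ≤ t * (f x₀ - f x) * ‖x - x₀‖ := by gcongr
    _ = r * (f x₀ - f x) := by rw [ht]; field_simp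

theorem ConcaveOn.isBounded_superlevel [FiniteDimensional ℝ E] (hf : ConcaveOn ℝ univ f)
    {M : ℝ} (hM : ∀ x, f x ≤ M) (hne : {x | f x = M}.Nonempty)
    (hbd : IsBounded {x | f x = M}) (α : ℝ) : IsBounded {x | α ≤ f x} := by
  obtain ⟨x₀, rfl⟩ := hne
  obtain ⟨r, hr, hball⟩ := hbd.subset_ball_lt 0 x₀
  have hlt : ∀ y ∈ sphere x₀ r, f y < f x₀ := fun y hy =>
    (hM y).lt_of_ne fun h => (mem_ball.1 (hball h)).ne (mem_sphere.1 hy)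
  obtain ⟨δ, hδ, hsphere⟩ :=
    (isCompact_sphere x₀ r).exists_pos_forall_add_le
      ((hf.continuousOn isOpen_univ).mono (subset_univ _)) hlt
  refine (isBounded_closedBall (x := x₀) (r := max r (r * (f x₀ - α) / δ))).subset
    fun x (hx : α ≤ f x) => ?_
  rw [mem_closedBall, dist_eq_norm]
  rcases le_total ‖x - x₀‖ r with hle | hge
  · exact hle.trans (le_max_left _ _)
  · refine le_max_of_le_right ((le_div_iff₀ hδ).2 ?_)
    calc ‖x - x₀‖ * δ = δ * ‖x - x₀‖ := mul_comm _ _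
      _ ≤ r * (f x₀ - f x) := hf.mul_norm_sub_le_of_sphere hr hge hsphere
      _ ≤ r * (f x₀ - α) := by gcongr

end Normed

theorem multiplier_sequence_bounded_general {n m p : ℕ}
    (X : Set (EuclideanSpace ℝ (Fin m))) (Z : Set (EuclideanSpace ℝ (Fin p)))
    (φ₁ : EuclideanSpace ℝ (Fin m) → ℝ) (φ₂ : EuclideanSpace ℝ (Fin p) → ℝ)
    (A : EuclideanSpace ℝ (Fin m) →L[ℝ] EuclideanSpace ℝ (Fin n))
    (B : EuclideanSpace ℝ (Fin p) →L[ℝ] EuclideanSpace ℝ (Fin n))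
    (b : EuclideanSpace ℝ (Fin n))
    (dX : EuclideanSpace ℝ (Fin m) → ℝ) (dZ : EuclideanSpace ℝ (Fin p) → ℝ)
    (DX DZ : ℝ) (hDX : ∀ x ∈ X, dX x ≤ DX) (hDZ : ∀ z ∈ Z, dZ z ≤ DZ)
    (f0 : EuclideanSpace ℝ (Fin n) → ℝ)
    (hf0 : ∀ lam : EuclideanSpace ℝ (Fin n),
      IsLeast ((fun q : EuclideanSpace ℝ (Fin m) × EuclideanSpace ℝ (Fin p) =>
        φ₁ q.1 + φ₂ q.2 + ⟪lam, A q.1 + B q.2 - b⟫) '' (X ×ˢ Z)) (f0 lam))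
    (fc : ℝ → EuclideanSpace ℝ (Fin n) → ℝ)
    (hfc : ∀ c : ℝ, 0 < c → ∀ lam : EuclideanSpace ℝ (Fin n),
      IsLeast ((fun q : EuclideanSpace ℝ (Fin m) × EuclideanSpace ℝ (Fin p) =>
        φ₁ q.1 + φ₂ q.2 + ⟪lam, A q.1 + B q.2 - b⟫ + c * (dX q.1 + dZ q.2)) '' (X ×ˢ Z))
        (fc c lam))
    (fstar : ℝ) (hub : ∀ lam, f0 lam ≤ fstar)
    (hΛne : {lam : EuclideanSpace ℝ (Fin n) | f0 lam = fstar}.Nonempty)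
    (hΛbd : Bornology.IsBounded {lam : EuclideanSpace ℝ (Fin n) | f0 lam = fstar}) :
    (∀ c : ℝ, 0 < c → ∀ lam0 : EuclideanSpace ℝ (Fin n),
      Bornology.IsBounded {lam : EuclideanSpace ℝ (Fin n) | fc c lam0 ≤ fc c lam}) ∧
    (∀ c : ℝ, 0 < c → ∀ seq : ℕ → EuclideanSpace ℝ (Fin n),
      (∀ j : ℕ, fc c (seq j) ≤ fc c (seq (j + 1))) →
      Bornology.IsBounded (Set.range seq)) := by
  have hconc : ConcaveOn ℝ univ f0 :=
    concaveOn_of_isLeast_image convex_univ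
      (fun q _ => (concaveOn_const _ convex_univ).add
        (((innerₗ _).flip (A q.1 + B q.2 - b)).concaveOn convex_univ))
      (fun lam _ => hf0 lam)
  have hfc_le : ∀ c, 0 < c → ∀ lam, fc c lam ≤ f0 lam + c * (DX + DZ) := fun c hc lam =>
    (hf0 lam).le_add_of_lowerBound_add (hfc c hc lam).2
      fun q hq => by gcongr; exacts [hDX _ hq.1, hDZ _ hq.2]
  have hsuper : ∀ c : ℝ, 0 < c → ∀ lam0,
      IsBounded {lam : EuclideanSpace ℝ (Fin n) | fc c lam0 ≤ fc c lam} := fun c hc lam0 =>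
    (hconc.isBounded_superlevel hub hΛne hΛbd (fc c lam0 - c * (DX + DZ))).subset
      fun lam (hlam : fc c lam0 ≤ fc c lam) => by
        show _ ≤ f0 lam
        linarith [hfc_le c hc lam]
  refine ⟨hsuper, fun c hc seq hmono => (hsuper c hc (seq 0)).subset ?_⟩
  rintro _ ⟨j, rfl⟩
  exact monotone_nat_of_le_succ hmono j.zero_le

/-- boundedness of superlevel sets of `f_c` and of monotone multiplier
sequences (Theorem 4). -/
theorem multiplier_sequence_bounded {n m p : ℕ}
    (X : Set (EuclideanSpace ℝ (Fin m))) (Z : Set (EuclideanSpace ℝ (Fin p)))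
    (hXne : X.Nonempty) (hXcomp : IsCompact X) (hXconv : Convex ℝ X)
    (hZne : Z.Nonempty) (hZcomp : IsCompact Z) (hZconv : Convex ℝ Z)
    (φ₁ : EuclideanSpace ℝ (Fin m) → ℝ) (φ₂ : EuclideanSpace ℝ (Fin p) → ℝ)
    (hφ₁cont : Continuous φ₁) (hφ₁conv : ConvexOn ℝ Set.univ φ₁)
    (hφ₂cont : Continuous φ₂) (hφ₂conv : ConvexOn ℝ Set.univ φ₂)
    (A : EuclideanSpace ℝ (Fin m) →L[ℝ] EuclideanSpace ℝ (Fin n))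
    (B : EuclideanSpace ℝ (Fin p) →L[ℝ] EuclideanSpace ℝ (Fin n))
    (b : EuclideanSpace ℝ (Fin n))
    (dX : EuclideanSpace ℝ (Fin m) → ℝ) (dZ : EuclideanSpace ℝ (Fin p) → ℝ)
    (hdXcont : Continuous dX) (hdXnn : ∀ x, 0 ≤ dX x)
    (hdZcont : Continuous dZ) (hdZnn : ∀ z, 0 ≤ dZ z)
    (DX DZ : ℝ) (hDX : ∀ x ∈ X, dX x ≤ DX) (hDZ : ∀ z ∈ Z, dZ z ≤ DZ)
    (f0 : EuclideanSpace ℝ (Fin n) → ℝ)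
    (hf0 : ∀ lam : EuclideanSpace ℝ (Fin n),
      IsLeast ((fun q : EuclideanSpace ℝ (Fin m) × EuclideanSpace ℝ (Fin p) =>
        φ₁ q.1 + φ₂ q.2 + ⟪lam, A q.1 + B q.2 - b⟫) '' (X ×ˢ Z)) (f0 lam))
    (fc : ℝ → EuclideanSpace ℝ (Fin n) → ℝ)
    (hfc : ∀ c : ℝ, 0 < c → ∀ lam : EuclideanSpace ℝ (Fin n),
      IsLeast ((fun q : EuclideanSpace ℝ (Fin m) × EuclideanSpace ℝ (Fin p) =>
        φ₁ q.1 + φ₂ q.2 + ⟪lam, A q.1 + B q.2 - b⟫ + c * (dX q.1 + dZ q.2)) '' (X ×ˢ Z))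
        (fc c lam))
    (fstar : ℝ) (hub : ∀ lam, f0 lam ≤ fstar)
    (hΛne : {lam : EuclideanSpace ℝ (Fin n) | f0 lam = fstar}.Nonempty)
    (hΛbd : Bornology.IsBounded {lam : EuclideanSpace ℝ (Fin n) | f0 lam = fstar}) :
    (∀ c : ℝ, 0 < c → ∀ lam0 : EuclideanSpace ℝ (Fin n),
      Bornology.IsBounded {lam : EuclideanSpace ℝ (Fin n) | fc c lam0 ≤ fc c lam}) ∧
    (∀ c : ℝ, 0 < c → ∀ seq : ℕ → EuclideanSpace ℝ (Fin n),
      (∀ j : ℕ, fc c (seq j) ≤ fc c (seq (j + 1))) →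
      Bornology.IsBounded (Set.range seq)) :=
  multiplier_sequence_bounded_general X Z φ₁ φ₂ A B b dX dZ DX DZ hDX hDZ f0 hf0 fc hfc fstar hub
    hΛne hΛbd
end
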